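/- arXiv:1207.5117 — 2 statements merged into one kernel-verified Lean document; each statement's English description precedes it below -/
import Mathlib

section
/- Let G be an abelian group (written additively) with a distinguished element u, embedded in a setting where arrays have integer-indexed sizes. For square arrays A of size m×m and B of size n×n with entries in ℤ, define (A*B) of size mn×mn by e_{α,β} = m²(b_{k,l} + u) + a_{i,j} where α = mk + i, β = ml + j with 0 ≤ i,j < m and 0 ≤ k,l < n. Then this operation is associative: (A*B)*C = A*(B*C) for all square arrays A, B, C. -/
/-- The product of an `m × m` integer array and an `n × n` integer array:
for `α = m*k + i`, `β = m*l + j` (`0 ≤ i,j < m`, `0 ≤ k,l < n`),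
`(A*B)(α,β) = m²(B(k,l) + u) + A(i,j)`. -/
def arrProd (u : ℤ) {m n : ℕ} (A : Fin m × Fin m → ℤ) (B : Fin n × Fin n → ℤ) :
    Fin (m * n) × Fin (m * n) → ℤ := fun p =>
  (m : ℤ) ^ 2 *
      (B ((Fin.cast (Nat.mul_comm m n) p.1).divNat,
          (Fin.cast (Nat.mul_comm m n) p.2).divNat) + u) +
    A ((Fin.cast (Nat.mul_comm m n) p.1).modNat,
       (Fin.cast (Nat.mul_comm m n) p.2).modNat)

theorem arrProd_assoc (u : ℤ) (m n p : ℕ)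
    (A : Fin m × Fin m → ℤ) (B : Fin n × Fin n → ℤ) (C : Fin p × Fin p → ℤ)
    (q : Fin (m * n * p) × Fin (m * n * p)) :
    arrProd u (arrProd u A B) C q =
      arrProd u A (arrProd u B C)
        (Fin.cast (Nat.mul_assoc m n p) q.1, Fin.cast (Nat.mul_assoc m n p) q.2) := by
  obtain ⟨α, β⟩ := q
  simp only [arrProd, Fin.divNat, Fin.modNat, Fin.cast]
  have h1 : ∀ x : ℕ, x / (m * n) = x / m / n := fun x =>
    (Nat.div_div_eq_div_mul x m n).symm
  have h2 : ∀ x : ℕ, x % (m * n) / m = x / m % n := fun x =>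
    Nat.mod_mul_right_div_self x m n
  have h3 : ∀ x : ℕ, x % (m * n) % m = x % m := fun x =>
    Nat.mod_mod_of_dvd x ⟨n, rfl⟩
  simp only [h1, h2, h3]
  push_cast
  ring
end

section
/- If G is an abelian group with a nonzero torsion element, then the array product operation (A*B)(mk+i, ml+j) = m²·(B(k,l)+u) + A(i,j) (with m²·x meaning x added to itself m² times in G) is not left cancellative: there exist m ≥ 2 and arrays A, B, C with B ≠ C but A*B = A*C. -/
/-- The product of square arrays over an additive abelian group `G`:
`(A*B)(mk+i, ml+j) = m² • (B(k,l) + u) + A(i,j)`. -/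
def gArrProd {G : Type*} [AddCommGroup G] (u : G) {m n : ℕ}
    (A : Fin m × Fin m → G) (B : Fin n × Fin n → G) :
    Fin (m * n) × Fin (m * n) → G := fun p =>
  (m ^ 2) •
      (B ((Fin.cast (Nat.mul_comm m n) p.1).divNat,
          (Fin.cast (Nat.mul_comm m n) p.2).divNat) + u) +
    A ((Fin.cast (Nat.mul_comm m n) p.1).modNat,
       (Fin.cast (Nat.mul_comm m n) p.2).modNat)

theorem gArrProd_not_left_cancellative {G : Type*} [AddCommGroup G] (u : G)
    (htor : ∃ g : G, g ≠ 0 ∧ ∃ k : ℕ, 0 < k ∧ k • g = 0) :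
    ∃ (m n : ℕ), 2 ≤ m ∧
      ∃ (A : Fin m × Fin m → G) (B C : Fin n × Fin n → G),
        B ≠ C ∧ gArrProd u A B = gArrProd u A C := by
  obtain ⟨g, hg, k, hk, hkg⟩ := htor
  have hk2 : 2 ≤ k := by
    rcases Nat.lt_or_ge k 2 with h | h
    · have : k = 1 := by omega
      subst this
      simp at hkg
      exact absurd hkg hg
    · exact h
  refine ⟨k, 1, hk2, fun _ => 0, fun _ => 0, fun _ => g, ?_, ?_⟩
  · intro h
    have := congrFun h (0, 0)
    exact hg this.symm
  · funext p
    simp only [gArrProd, zero_add]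
    have : (k ^ 2) • (g + u) = (k ^ 2) • u := by
      rw [smul_add, pow_two, mul_smul, hkg, smul_zero, zero_add]
    rw [this]
end
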